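/- Let n ≥ 3 be odd. Then the sequence consisting of (n+3)/2 followed by the number 1 repeated (n−3)/2 times is a partition of n and its value λ equals n. -/

import Mathlib

/-- `λ(p) = (1/2)·Σ_{j=1}^k n_j·(n_j − 2j + 1)` for a finite sequence of naturals. -/
def transLam (L : List ℕ) : ℚ :=
  (∑ j ∈ Finset.range L.length,
    (L.getD j 0 : ℚ) * ((L.getD j 0 : ℚ) - 2 * ((j : ℚ) + 1) + 1)) / 2

/-- A partition of `n`: a nonincreasing list of positive integers summing to `n`. -/
def IsPartitionOf (n : ℕ) (L : List ℕ) : Prop :=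
  L.Pairwise (· ≥ ·) ∧ (∀ x ∈ L, 0 < x) ∧ L.sum = n

/-!
Prepending a part `a` shifts every other part one row down, which lowers each of their
contributions `n_j (n_j - 2j + 1) / 2` by `n_j`; hence `λ(a :: L) = a(a-1)/2 + λ(L) - ΣL`.
For the hook `(a, 1^m)` this gives `λ = (a(a-1) - m(m+1))/2`, which is `n` for
`a = (n+3)/2`, `m = (n-3)/2`.
-/

theorem List.sum_range_length_getD {α M : Type*} [AddCommMonoid M] (f : α → M) (d : α)
    (L : List α) : ∑ j ∈ Finset.range L.length, f (L.getD j d) = (L.map f).sum := by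
  induction L with
  | nil => simp
  | cons a L ih =>
    rw [List.length_cons, Finset.sum_range_succ']
    simp only [List.getD_cons_succ, List.getD_cons_zero, ih, List.map_cons, List.sum_cons]
    exact add_comm _ _

theorem transLam_cons (a : ℕ) (L : List ℕ) :
    transLam (a :: L) = a * (a - 1) / 2 + transLam L - L.sum := by
  have hsum : ∑ j ∈ Finset.range L.length, (L.getD j 0 : ℚ) = L.sum := by
    rw [List.sum_range_length_getD, Nat.cast_list_sum]
  have hshift (x : ℚ) (j : ℕ) :
      x * (x - 2 * (((j + 1 : ℕ) : ℚ) + 1) + 1) = x * (x - 2 * ((j : ℚ) + 1) + 1) - 2 * x := by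
    push_cast; ring
  unfold transLam
  rw [List.length_cons, Finset.sum_range_succ']
  simp only [List.getD_cons_succ, List.getD_cons_zero, hshift, Finset.sum_sub_distrib,
    ← Finset.mul_sum, hsum]
  push_cast
  ring

theorem transLam_replicate_one (m : ℕ) :
    transLam (List.replicate m 1) = -(m * (m - 1) / 2 : ℚ) := by
  induction m with
  | zero => simp [transLam]
  | succ m ih =>
    rw [List.replicate_succ, transLam_cons, ih]
    simp only [List.sum_replicate, smul_eq_mul, mul_one]
    push_cast
    ring

theorem transLam_hook (a m : ℕ) :
    transLam (a :: List.replicate m 1) = (a * (a - 1) - m * (m + 1)) / 2 := by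
  rw [transLam_cons, transLam_replicate_one]
  simp only [List.sum_replicate, smul_eq_mul, mul_one]
  ring

theorem isPartitionOf_hook {a : ℕ} (ha : 0 < a) (m : ℕ) :
    IsPartitionOf (a + m) (a :: List.replicate m 1) := by
  refine ⟨?_, ?_, by simp⟩
  · rw [List.pairwise_cons]
    exact ⟨fun b hb => (List.eq_of_mem_replicate hb).symm ▸ ha,
      List.pairwise_replicate.2 (Or.inr le_rfl)⟩
  · intro x hx
    rcases List.mem_cons.1 hx with rfl | hx
    · exact ha
    · exact (List.eq_of_mem_replicate hx).symm ▸ Nat.one_pos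

theorem lam_hook_eq_n (n : ℕ) (hn : 3 ≤ n) (hodd : Odd n) :
    IsPartitionOf n ((n + 3) / 2 :: List.replicate ((n - 3) / 2) 1) ∧
    transLam ((n + 3) / 2 :: List.replicate ((n - 3) / 2) 1) = (n : ℚ) := by
  obtain ⟨k, rfl⟩ := hodd
  obtain ⟨m, rfl⟩ : ∃ m, k = m + 1 := ⟨k - 1, by omega⟩
  have ha : (2 * (m + 1) + 1 + 3) / 2 = m + 3 := by omega
  have hm : (2 * (m + 1) + 1 - 3) / 2 = m := by omega
  rw [ha, hm]
  constructor
  · convert isPartitionOf_hook (a := m + 3) (Nat.succ_pos _) m using 1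
    ring
  · rw [transLam_hook]
    push_cast
    ring
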